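/- For any Boolean function f : {-1,1}^n → {-1,1}, ∑_{k∈[n]} −I_k(f)·log I_k(f) ≤ 2·∑_S |S|² f̂(S)², with the convention that terms with I_k(f) = 0 contribute 0 (log denotes natural logarithm, or any fixed base consistent throughout). -/

import Mathlib

/-!
For a Boolean `f`, the derivative `g = D_k f = (f - f ∘ flip k) / 2` takes values in `{-1, 0, 1}`,
so `g² log g² ≡ 0` and the entropy of `g²` is `-I_k log I_k`, where `I_k = E g²`. The log-Sobolev
inequality on the cube, `Ent(g²) ≤ 2 ∑_j E (D_j g)²`, obtained by tensorising Gross's two-point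
inequality, bounds this by `2 ∑_S |S| ĝ(S)² = 2 ∑_{S ∋ k} |S| f̂(S)²`; summing over `k` gives the
claim.
-/

open Finset

noncomputable def bSgn (b : Bool) : ℝ := if b then 1 else -1

noncomputable def bChi {n : ℕ} (S : Finset (Fin n)) (x : Fin n → Bool) : ℝ :=
  ∏ i ∈ S, bSgn (x i)

noncomputable def bExpect {n : ℕ} (g : (Fin n → Bool) → ℝ) : ℝ :=
  (∑ x : Fin n → Bool, g x) / 2 ^ n

noncomputable def bFourier {n : ℕ} (f : (Fin n → Bool) → ℝ) (S : Finset (Fin n)) : ℝ :=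
  bExpect fun x => f x * bChi S x

def bFlip1 {n : ℕ} (k : Fin n) (x : Fin n → Bool) : Fin n → Bool :=
  Function.update x k (!(x k))

def bFlipS {n : ℕ} (T : Finset (Fin n)) (x : Fin n → Bool) : Fin n → Bool :=
  fun i => if i ∈ T then !(x i) else x i

/-- combinatorial influence of bit `k` -/
noncomputable def inflC {n : ℕ} (f : (Fin n → Bool) → ℝ) (k : Fin n) : ℝ :=
  bExpect fun x => if f x ≠ f (bFlip1 k x) then 1 else 0

/-- spectral influence of bit `k` -/
noncomputable def inflS {n : ℕ} (f : (Fin n → Bool) → ℝ) (k : Fin n) : ℝ :=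
  ∑ S ∈ univ.filter (fun S : Finset (Fin n) => k ∈ S), bFourier f S ^ 2

/-- total influence (spectral form) -/
noncomputable def totInfl {n : ℕ} (f : (Fin n → Bool) → ℝ) : ℝ :=
  ∑ S : Finset (Fin n), (S.card : ℝ) * bFourier f S ^ 2

/-- spectrum entropy, base 2; terms with zero coefficient contribute 0 -/
noncomputable def specEnt {n : ℕ} (f : (Fin n → Bool) → ℝ) : ℝ :=
  ∑ S : Finset (Fin n), bFourier f S ^ 2 * Real.logb 2 (1 / bFourier f S ^ 2)

/-- `f` is Boolean (±1)-valued -/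
def IsBooleanFn {n : ℕ} (f : (Fin n → Bool) → ℝ) : Prop :=
  ∀ x, f x = 1 ∨ f x = -1

open Real

lemma sub_one_le_log_mean_sq {t : ℝ} (ht : t ≤ 1) : t - 1 ≤ log ((1 + t ^ 2) / 2) := by
  rw [le_log_iff_exp_le (by positivity)]
  have hquad := quadratic_le_exp_of_nonneg (sub_nonneg.2 ht)
  have hinv : exp (t - 1) * exp (1 - t) = 1 := by rw [← exp_add]; simp
  -- with `s = 1 - t`: `(1 + t²)/2 · (1 + s + s²/2) = 1 + s⁴/4`
  nlinarith [exp_pos (t - 1), sq_nonneg ((1 - t) ^ 2)]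

noncomputable def twoPointEntSq (a b : ℝ) : ℝ :=
  (a ^ 2 * log (a ^ 2) + b ^ 2 * log (b ^ 2)) / 2 - (a ^ 2 + b ^ 2) / 2 * log ((a ^ 2 + b ^ 2) / 2)

lemma twoPointEntSq_comm (a b : ℝ) : twoPointEntSq a b = twoPointEntSq b a := by
  unfold twoPointEntSq; ring_nf

lemma twoPointEntSq_abs (a b : ℝ) : twoPointEntSq |a| |b| = twoPointEntSq a b := by
  simp only [twoPointEntSq, sq_abs]

lemma hasDerivAt_twoPointEntSq (b : ℝ) {x : ℝ} (hx : x ≠ 0) :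
    HasDerivAt (fun y => twoPointEntSq y b) (x * (log (x ^ 2) - log ((x ^ 2 + b ^ 2) / 2))) x := by
  have hsq : HasDerivAt (fun y : ℝ => y ^ 2) (2 * x) x := by simpa using hasDerivAt_pow 2 x
  have hself : HasDerivAt (fun y => y ^ 2 * log (y ^ 2)) ((log (x ^ 2) + 1) * (2 * x)) x :=
    (hasDerivAt_mul_log (pow_ne_zero 2 hx)).comp (h := fun y => y ^ 2) x hsq
  have hmean : HasDerivAt (fun y => (y ^ 2 + b ^ 2) / 2 * log ((y ^ 2 + b ^ 2) / 2))
      ((log ((x ^ 2 + b ^ 2) / 2) + 1) * (2 * x / 2)) x :=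
    (hasDerivAt_mul_log (by positivity)).comp (h := fun y => (y ^ 2 + b ^ 2) / 2) x
      ((hsq.add_const (b ^ 2)).div_const 2)
  exact (((hself.add_const (b ^ 2 * log (b ^ 2))).div_const 2).sub hmean).congr_deriv (by ring)

lemma sub_le_mul_log_mean_sq_sub_log_sq {b x : ℝ} (hb : 0 ≤ b) (hbx : b < x) :
    b - x ≤ x * (log ((x ^ 2 + b ^ 2) / 2) - log (x ^ 2)) := by
  have hx : 0 < x := hb.trans_lt hbx
  have hmean : (x ^ 2 + b ^ 2) / 2 / x ^ 2 = (1 + (b / x) ^ 2) / 2 := by field_simp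
  rw [← log_div (by positivity) (by positivity), hmean]
  have := mul_le_mul_of_nonneg_left (sub_one_le_log_mean_sq ((div_le_one hx).2 hbx.le)) hx.le
  rwa [mul_sub, mul_div_cancel₀ b hx.ne', mul_one] at this

lemma twoPointEntSq_le_of_le {a b : ℝ} (hb : 0 ≤ b) (hab : b ≤ a) :
    twoPointEntSq a b ≤ (a - b) ^ 2 / 2 := by
  set gap : ℝ → ℝ := fun x => (x - b) ^ 2 / 2 - twoPointEntSq x b
  have hmono : MonotoneOn gap (Set.Ici b) := by
    refine monotoneOn_of_hasDerivWithinAt_nonneg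
      (f' := fun x => x - b - x * (log (x ^ 2) - log ((x ^ 2 + b ^ 2) / 2))) (convex_Ici b)
      ?_ (fun x hx => ?_) (fun x hx => ?_)
    · have := continuous_mul_log
      unfold gap twoPointEntSq
      fun_prop
    · rw [interior_Ici] at hx
      have hsq : HasDerivAt (fun y => (y - b) ^ 2 / 2) (x - b) x := by
        simpa using (((hasDerivAt_id x).sub_const b).pow 2).div_const 2
      exact (hsq.sub (hasDerivAt_twoPointEntSq b (hb.trans_lt hx).ne')).hasDerivWithinAt
    · rw [interior_Ici] at hx
      linarith [sub_le_mul_log_mean_sq_sub_log_sq hb hx]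
  have hgap_b : gap b = 0 := by simp [gap, twoPointEntSq]
  have := hmono Set.self_mem_Ici hab hab
  simp only [hgap_b, gap] at this
  linarith

theorem twoPointEntSq_le (a b : ℝ) : twoPointEntSq a b ≤ (a - b) ^ 2 / 2 := by
  have habs : (|a| - |b|) ^ 2 ≤ (a - b) ^ 2 :=
    sq_le_sq.2 (by simpa using abs_abs_sub_abs_le_abs_sub a b)
  rw [← twoPointEntSq_abs]
  rcases le_total |b| |a| with h | h
  · linarith [twoPointEntSq_le_of_le (abs_nonneg b) h]
  · rw [twoPointEntSq_comm]
    nlinarith [twoPointEntSq_le_of_le (abs_nonneg a) h]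

section Expectation

variable {n : ℕ}

lemma bExpect_sub (g g' : (Fin n → Bool) → ℝ) :
    bExpect (fun x => g x - g' x) = bExpect g - bExpect g' := by
  simp only [bExpect, sum_sub_distrib, sub_div]

lemma bExpect_const_mul (c : ℝ) (g : (Fin n → Bool) → ℝ) :
    bExpect (fun x => c * g x) = c * bExpect g := by
  simp only [bExpect, ← mul_sum, mul_div_assoc]

lemma bExpect_mono {g g' : (Fin n → Bool) → ℝ} (h : ∀ x, g x ≤ g' x) :
    bExpect g ≤ bExpect g' :=
  div_le_div_of_nonneg_right (sum_le_sum fun x _ => h x) (by positivity)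

lemma bExpect_succ (F : (Fin (n + 1) → Bool) → ℝ) :
    bExpect F = bExpect fun y => (F (Fin.cons false y) + F (Fin.cons true y)) / 2 := by
  have hsum : ∑ x, F x = ∑ y : Fin n → Bool, (F (Fin.cons false y) + F (Fin.cons true y)) := by
    rw [← (Fin.consEquiv fun _ => Bool).sum_comp, Fintype.sum_prod_type_right]
    simp [Fin.consEquiv, add_comm]
  simp only [bExpect, hsum, ← sum_div, pow_succ, div_div, mul_comm]

end Expectation

section Fourier

variable {n : ℕ}

noncomputable def bDeriv (k : Fin n) (h : (Fin n → Bool) → ℝ) (x : Fin n → Bool) : ℝ :=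
  (h x - h (bFlip1 k x)) / 2

lemma bFlip1_involutive (k : Fin n) : Function.Involutive (bFlip1 k) :=
  fun x => by simp [bFlip1]

lemma bSgn_bFlip1 (k : Fin n) (x : Fin n → Bool) (i : Fin n) :
    bSgn (bFlip1 k x i) = (if i = k then -1 else 1) * bSgn (x i) := by
  by_cases hi : i = k
  · subst hi
    simp only [bFlip1, Function.update_self, if_true]
    cases x i <;> simp [bSgn]
  · simp [bFlip1, hi]

lemma bChi_bFlip1 (S : Finset (Fin n)) (k : Fin n) (x : Fin n → Bool) :
    bChi S (bFlip1 k x) = (if k ∈ S then -1 else 1) * bChi S x := by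
  simp only [bChi, bSgn_bFlip1, prod_mul_distrib, prod_ite_eq']

lemma one_add_bSgn_mul_bSgn (a b : Bool) : 1 + bSgn a * bSgn b = if a = b then 2 else 0 := by
  cases a <;> cases b <;> norm_num [bSgn]

lemma sum_bChi_mul_bChi (x y : Fin n → Bool) :
    ∑ S : Finset (Fin n), bChi S x * bChi S y = if x = y then 2 ^ n else 0 := by
  simp only [bChi, ← prod_mul_distrib]
  rw [← powerset_univ, ← prod_one_add, prod_congr rfl fun i _ => one_add_bSgn_mul_bSgn (x i) (y i),
    prod_ite_zero]
  simp [funext_iff]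

theorem sum_bFourier_sq (h : (Fin n → Bool) → ℝ) :
    ∑ S : Finset (Fin n), bFourier h S ^ 2 = bExpect fun x => h x ^ 2 := by
  have hsum : ∑ S : Finset (Fin n), (∑ x, h x * bChi S x) ^ 2 = 2 ^ n * ∑ x, h x ^ 2 :=
    calc ∑ S : Finset (Fin n), (∑ x, h x * bChi S x) ^ 2
        = ∑ S : Finset (Fin n), ∑ x, ∑ y, h x * h y * (bChi S x * bChi S y) := by
          refine sum_congr rfl fun S _ => ?_
          rw [sq, sum_mul_sum]
          exact sum_congr rfl fun x _ => sum_congr rfl fun y _ => by ring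
      _ = ∑ x, ∑ y, h x * h y * ∑ S : Finset (Fin n), bChi S x * bChi S y := by
          rw [sum_comm]
          refine sum_congr rfl fun x _ => ?_
          rw [sum_comm]
          simp only [mul_sum]
      _ = 2 ^ n * ∑ x, h x ^ 2 := by
          simp [sum_bChi_mul_bChi, mul_sum, sq, mul_comm]
  simp only [bFourier, bExpect, div_pow, ← sum_div, hsum]
  field_simp

lemma bFourier_bDeriv (k : Fin n) (h : (Fin n → Bool) → ℝ) (S : Finset (Fin n)) :
    bFourier (bDeriv k h) S = if k ∈ S then bFourier h S else 0 := by
  have hflip :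
      ∑ x, h (bFlip1 k x) * bChi S x = (if k ∈ S then -1 else 1) * ∑ x, h x * bChi S x := by
    rw [← Equiv.sum_comp (bFlip1_involutive k).toPerm, mul_sum]
    refine sum_congr rfl fun x _ => ?_
    simp only [Function.Involutive.coe_toPerm, bFlip1_involutive k x, bChi_bFlip1]
    ring
  simp only [bFourier, bExpect, bDeriv, div_mul_eq_mul_div, sub_mul, ← sum_div, sum_sub_distrib,
    hflip]
  split_ifs <;> ring

lemma bExpect_bDeriv_sq (k : Fin n) (h : (Fin n → Bool) → ℝ) :
    bExpect (fun x => bDeriv k h x ^ 2) = inflS h k := by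
  simp [← sum_bFourier_sq, bFourier_bDeriv, inflS, sum_filter]

lemma sum_sum_filter_mem (w : Finset (Fin n) → ℝ) :
    ∑ k, ∑ S ∈ univ.filter (fun S => k ∈ S), w S = ∑ S, (S.card : ℝ) * w S := by
  rw [sum_comm' (t' := univ) (s' := fun S => S)] <;> simp

lemma sum_bExpect_bDeriv_sq (h : (Fin n → Bool) → ℝ) :
    ∑ k, bExpect (fun x => bDeriv k h x ^ 2) = totInfl h := by
  simp only [bExpect_bDeriv_sq, inflS, sum_sum_filter_mem, totInfl]

lemma totInfl_bDeriv (k : Fin n) (h : (Fin n → Bool) → ℝ) :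
    totInfl (bDeriv k h) = ∑ S ∈ univ.filter (fun S => k ∈ S), (S.card : ℝ) * bFourier h S ^ 2 := by
  simp [totInfl, bFourier_bDeriv, sum_filter]

end Fourier

-- `(‖a‖ - ‖b‖)² ≤ ‖a - b‖²` for the normalised Euclidean norm on `ℝ²`
lemma sqrt_mean_sq_sub_sqrt_mean_sq_sq_le (a₀ a₁ b₀ b₁ : ℝ) :
    (√((a₀ ^ 2 + a₁ ^ 2) / 2) - √((b₀ ^ 2 + b₁ ^ 2) / 2)) ^ 2
      ≤ ((a₀ - b₀) ^ 2 + (a₁ - b₁) ^ 2) / 2 := by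
  set A := √((a₀ ^ 2 + a₁ ^ 2) / 2)
  set B := √((b₀ ^ 2 + b₁ ^ 2) / 2)
  have hA : A ^ 2 = (a₀ ^ 2 + a₁ ^ 2) / 2 := sq_sqrt (by positivity)
  have hB : B ^ 2 = (b₀ ^ 2 + b₁ ^ 2) / 2 := sq_sqrt (by positivity)
  have hcs : a₀ * b₀ + a₁ * b₁ ≤ 2 * (A * B) := by
    refine le_of_abs_le (abs_le_of_sq_le_sq ?_ (by positivity))
    nlinarith [sq_nonneg (a₀ * b₁ - a₁ * b₀)]
  nlinarith

section LogSobolev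

variable {n : ℕ}

noncomputable def bEntSq (h : (Fin n → Bool) → ℝ) : ℝ :=
  bExpect (fun x => h x ^ 2 * log (h x ^ 2))
    - bExpect (fun x => h x ^ 2) * log (bExpect fun x => h x ^ 2)

noncomputable def rmsFirst (h : (Fin (n + 1) → Bool) → ℝ) (y : Fin n → Bool) : ℝ :=
  √((h (Fin.cons false y) ^ 2 + h (Fin.cons true y) ^ 2) / 2)

lemma rmsFirst_sq (h : (Fin (n + 1) → Bool) → ℝ) (y : Fin n → Bool) :
    rmsFirst h y ^ 2 = (h (Fin.cons false y) ^ 2 + h (Fin.cons true y) ^ 2) / 2 :=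
  sq_sqrt (by positivity)

lemma bEntSq_succ (h : (Fin (n + 1) → Bool) → ℝ) :
    bEntSq h = bExpect (fun y => twoPointEntSq (h (Fin.cons false y)) (h (Fin.cons true y)))
      + bEntSq (rmsFirst h) := by
  have hsq : bExpect (fun x => h x ^ 2) = bExpect fun y => rmsFirst h y ^ 2 := by
    rw [bExpect_succ]; simp only [rmsFirst_sq]
  simp only [bEntSq, twoPointEntSq, ← rmsFirst_sq, bExpect_sub, hsq,
    bExpect_succ (fun x => h x ^ 2 * log (h x ^ 2))]
  ring

lemma bExpect_bDeriv_zero_sq (h : (Fin (n + 1) → Bool) → ℝ) :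
    bExpect (fun x => bDeriv 0 h x ^ 2)
      = bExpect fun y => (h (Fin.cons false y) - h (Fin.cons true y)) ^ 2 / 4 := by
  rw [bExpect_succ]
  congr 1
  funext y
  simp only [bDeriv, bFlip1, Fin.cons_zero, Fin.update_cons_zero, Bool.not_false, Bool.not_true]
  ring

lemma bDeriv_rmsFirst_sq_le (j : Fin n) (h : (Fin (n + 1) → Bool) → ℝ) (y : Fin n → Bool) :
    bDeriv j (rmsFirst h) y ^ 2
      ≤ (bDeriv j.succ h (Fin.cons false y) ^ 2 + bDeriv j.succ h (Fin.cons true y) ^ 2) / 2 := by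
  simp only [bDeriv, bFlip1, rmsFirst, Fin.cons_succ, ← Fin.cons_update]
  nlinarith [sqrt_mean_sq_sub_sqrt_mean_sq_sq_le (h (Fin.cons false y)) (h (Fin.cons true y))
    (h (Fin.cons false (Function.update y j !y j))) (h (Fin.cons true (Function.update y j !y j)))]

theorem bEntSq_le_two_mul_sum_bExpect_bDeriv_sq (h : (Fin n → Bool) → ℝ) :
    bEntSq h ≤ 2 * ∑ k, bExpect (fun x => bDeriv k h x ^ 2) := by
  induction n with
  | zero => simp [bEntSq, bExpect]
  | succ n ih =>
    have hfirst : bExpect (fun y => twoPointEntSq (h (Fin.cons false y)) (h (Fin.cons true y)))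
        ≤ 2 * bExpect (fun x => bDeriv 0 h x ^ 2) := by
      rw [bExpect_bDeriv_zero_sq, ← bExpect_const_mul]
      exact bExpect_mono fun y => by
        linarith [twoPointEntSq_le (h (Fin.cons false y)) (h (Fin.cons true y))]
    have hrest :
        bEntSq (rmsFirst h) ≤ 2 * ∑ j : Fin n, bExpect (fun x => bDeriv j.succ h x ^ 2) := by
      refine (ih _).trans (mul_le_mul_of_nonneg_left (sum_le_sum fun j _ => ?_) zero_le_two)
      rw [bExpect_succ fun x => bDeriv j.succ h x ^ 2]
      exact bExpect_mono (bDeriv_rmsFirst_sq_le j h)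
    rw [bEntSq_succ, Fin.sum_univ_succ, mul_add]
    exact add_le_add hfirst hrest

theorem bEntSq_le_two_mul_totInfl (h : (Fin n → Bool) → ℝ) : bEntSq h ≤ 2 * totInfl h :=
  sum_bExpect_bDeriv_sq h ▸ bEntSq_le_two_mul_sum_bExpect_bDeriv_sq h

end LogSobolev

section Boolean

variable {n : ℕ} {f : (Fin n → Bool) → ℝ}

lemma IsBooleanFn.bDeriv_sq_mul_log (hf : IsBooleanFn f) (k : Fin n) (x : Fin n → Bool) :
    bDeriv k f x ^ 2 * log (bDeriv k f x ^ 2) = 0 := by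
  rcases hf x with h₁ | h₁ <;> rcases hf (bFlip1 k x) with h₂ | h₂ <;> norm_num [bDeriv, h₁, h₂]

lemma IsBooleanFn.bEntSq_bDeriv (hf : IsBooleanFn f) (k : Fin n) :
    bEntSq (bDeriv k f) = -(inflS f k * log (inflS f k)) := by
  simp only [bEntSq, hf.bDeriv_sq_mul_log, bExpect_bDeriv_sq]
  simp [bExpect]

end Boolean

theorem influence_entropy_bound (n : ℕ) (f : (Fin n → Bool) → ℝ)
    (hf : IsBooleanFn f) :
    ∑ k : Fin n, -(inflS f k * Real.log (inflS f k))
      ≤ 2 * ∑ S : Finset (Fin n), (S.card : ℝ) ^ 2 * bFourier f S ^ 2 :=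
  calc ∑ k, -(inflS f k * log (inflS f k))
      = ∑ k, bEntSq (bDeriv k f) := by simp only [hf.bEntSq_bDeriv]
    _ ≤ ∑ k, 2 * totInfl (bDeriv k f) := sum_le_sum fun k _ => bEntSq_le_two_mul_totInfl _
    _ = 2 * ∑ S : Finset (Fin n), (S.card : ℝ) ^ 2 * bFourier f S ^ 2 := by
      simp only [totInfl_bDeriv, ← mul_sum, sum_sum_filter_mem, sq, mul_assoc]
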